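/- Let μ, ν ∈ {+1, −1}, n, m ∈ ℤ, ξ, η ∈ ℝ², and define Λ_k(ζ) = √(1 + |ζ|² + k²) and the phase Φ(ξ, η) = Λ_n(ξ) − μΛ_{n−m}(ξ−η) − νΛ_m(η). Then there is a universal constant C > 0 such that |∇_{ξ,η} Φ(ξ, η)| ≤ C |Φ(ξ, η)| for all ξ, η, n, m and all sign choices μ, ν. -/

import Mathlib

noncomputable section

/-- The Klein–Gordon dispersion relation `Λ_k(ζ) = √(1 + |ζ|² + k²)`. -/
def KGweight (k : ℤ) (ζ : EuclideanSpace ℝ (Fin 2)) : ℝ :=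
  Real.sqrt (1 + ‖ζ‖ ^ 2 + (k : ℝ) ^ 2)

/-- The phase `Φ^{n,m}_{μ,ν}(ξ, η) = Λ_n(ξ) − μ Λ_{n−m}(ξ−η) − ν Λ_m(η)`,
viewed as a function of the pair `(ξ, η)`. -/
def KGphase (μ ν : ℝ) (n m : ℤ)
    (p : EuclideanSpace ℝ (Fin 2) × EuclideanSpace ℝ (Fin 2)) : ℝ :=
  KGweight n p.1 - μ * KGweight (n - m) (p.1 - p.2) - ν * KGweight m p.2

/-!
Write `⟨X⟩ = √(1 + ‖X‖²)` on `ℝ³`, so that `Λ_k(ζ) = ⟨(ζ, k)⟩`, and put `X = (ξ, n)`,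
`Y = (ξ - η, n - m)`, `Z = (η, m)`; then `X = Y + Z`, and the two components of `∇Φ` are the
projections to `ℝ²` of `X/⟨X⟩ - μ Y/⟨Y⟩` and `μ Y/⟨Y⟩ - ν Z/⟨Z⟩`.

For `μ = ν = -1` the phase is `≥ 3` while every velocity `P/⟨P⟩` has norm `≤ 1`. In the other
three cases `|Φ|` is the defect `⟨P⟩ + ⟨Q⟩ - ⟨P + Q⟩` of the triangle inequality for a pair
`P, Q` among `±Y, ±Z, X`, and this defect equals `(1 + 2L) / (⟨P⟩ + ⟨Q⟩ + ⟨P + Q⟩)`, where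
`L = ⟨P⟩⟨Q⟩ - ⟪P, Q⟫ ≥ 1` is the Minkowski product of `(⟨P⟩, P)` and `(⟨Q⟩, Q)`. On the
other side `‖P/⟨P⟩ - Q/⟨Q⟩‖² ≤ 2L / (⟨P⟩⟨Q⟩) ≤ (3L / (⟨P⟩ + ⟨Q⟩))²`, and the same bound
with `L + 1` in place of `L` holds for the pair `P + Q, P`.
-/

open RealInnerProductSpace

namespace KleinGordon

section Bracket

variable {E : Type*} [SeminormedAddGroup E]

def japaneseBracket (X : E) : ℝ := Real.sqrt (1 + ‖X‖ ^ 2)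

theorem japaneseBracket_sq (X : E) : japaneseBracket X ^ 2 = 1 + ‖X‖ ^ 2 :=
  Real.sq_sqrt (by positivity)

theorem one_le_japaneseBracket (X : E) : 1 ≤ japaneseBracket X :=
  Real.one_le_sqrt.2 (le_add_of_nonneg_right (sq_nonneg _))

theorem japaneseBracket_pos (X : E) : 0 < japaneseBracket X :=
  one_pos.trans_le (one_le_japaneseBracket X)

theorem norm_le_japaneseBracket (X : E) : ‖X‖ ≤ japaneseBracket X := by
  nlinarith [japaneseBracket_sq X, norm_nonneg X, japaneseBracket_pos X]

@[simp]
theorem japaneseBracket_neg (X : E) : japaneseBracket (-X) = japaneseBracket X := by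
  simp [japaneseBracket]

end Bracket

section Hyperboloid

variable {E : Type*} [NormedAddCommGroup E] [InnerProductSpace ℝ E]

/-- The gradient of `japaneseBracket` at `X`. -/
def velocity (X : E) : E := (japaneseBracket X)⁻¹ • X

/-- The Minkowski product of the points `(⟨X⟩, X)` and `(⟨Y⟩, Y)` of the unit hyperboloid,
i.e. the hyperbolic cosine of their distance. -/
def lorentzPairing (X Y : E) : ℝ := japaneseBracket X * japaneseBracket Y - ⟪X, Y⟫

@[simp]
theorem velocity_neg (X : E) : velocity (-X) = -velocity X := by
  simp [velocity]

theorem norm_velocity_le_one (X : E) : ‖velocity X‖ ≤ 1 := by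
  have ha := japaneseBracket_pos X
  rw [velocity, norm_smul, norm_inv, Real.norm_of_nonneg ha.le, inv_mul_le_iff₀ ha, mul_one]
  exact norm_le_japaneseBracket X

theorem norm_velocity_sub_sq (X Y : E) :
    ‖velocity X - velocity Y‖ ^ 2 =
      2 * lorentzPairing X Y / (japaneseBracket X * japaneseBracket Y)
        - 1 / japaneseBracket X ^ 2 - 1 / japaneseBracket Y ^ 2 := by
  have ha := japaneseBracket_pos X
  have hb := japaneseBracket_pos Y
  rw [velocity, velocity, norm_sub_sq_real, norm_smul, norm_smul, real_inner_smul_left,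
    real_inner_smul_right, norm_inv, norm_inv, Real.norm_of_nonneg ha.le,
    Real.norm_of_nonneg hb.le, lorentzPairing]
  field_simp
  linear_combination -(japaneseBracket Y ^ 2 * japaneseBracket_sq X
    + japaneseBracket X ^ 2 * japaneseBracket_sq Y)

theorem sq_add_sq_le_lorentzPairing (X Y : E) :
    japaneseBracket X ^ 2 + japaneseBracket Y ^ 2 ≤
      2 * japaneseBracket X * japaneseBracket Y * lorentzPairing X Y := by
  have ha := japaneseBracket_pos X
  have hb := japaneseBracket_pos Y
  have h := norm_velocity_sub_sq X Y
  have h0 : 0 ≤ 2 * lorentzPairing X Y / (japaneseBracket X * japaneseBracket Y)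
      - 1 / japaneseBracket X ^ 2 - 1 / japaneseBracket Y ^ 2 := h ▸ by positivity
  field_simp at h0
  linarith

theorem one_le_lorentzPairing (X Y : E) : 1 ≤ lorentzPairing X Y := by
  have hab := mul_pos (japaneseBracket_pos X) (japaneseBracket_pos Y)
  nlinarith [sq_add_sq_le_lorentzPairing X Y,
    sq_nonneg (japaneseBracket X - japaneseBracket Y)]

theorem norm_velocity_sub_le (X Y : E) :
    ‖velocity X - velocity Y‖ ≤
      3 * lorentzPairing X Y / (japaneseBracket X + japaneseBracket Y) := by
  set a := japaneseBracket X
  set b := japaneseBracket Y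
  set L := lorentzPairing X Y
  have ha : 0 < a := japaneseBracket_pos X
  have hb : 0 < b := japaneseBracket_pos Y
  have hL : 1 ≤ L := one_le_lorentzPairing X Y
  have hsq : a ^ 2 + b ^ 2 ≤ 2 * a * b * L := sq_add_sq_le_lorentzPairing X Y
  have h : ‖velocity X - velocity Y‖ ^ 2 ≤ (3 * L / (a + b)) ^ 2 :=
    calc ‖velocity X - velocity Y‖ ^ 2 ≤ 2 * L / (a * b) := by
          rw [norm_velocity_sub_sq]
          linarith [one_div_nonneg.2 (sq_nonneg a), one_div_nonneg.2 (sq_nonneg b)]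
      _ ≤ (3 * L / (a + b)) ^ 2 := by
          rw [div_pow, div_le_div_iff₀ (by positivity) (by positivity)]
          nlinarith [mul_le_mul_of_nonneg_left hsq (by positivity : (0:ℝ) ≤ L),
            mul_pos ha hb, mul_pos (mul_pos ha hb) (by linarith : (0:ℝ) < L)]
  exact (pow_le_pow_iff_left₀ (norm_nonneg _) (by positivity) two_ne_zero).1 h

theorem sq_add_sub_sq_japaneseBracket_add (X Y : E) :
    (japaneseBracket X + japaneseBracket Y) ^ 2 - japaneseBracket (X + Y) ^ 2 =
      1 + 2 * lorentzPairing X Y := by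
  rw [add_sq, japaneseBracket_sq, japaneseBracket_sq, japaneseBracket_sq, norm_add_sq_real,
    lorentzPairing]
  ring

theorem japaneseBracket_add_le (X Y : E) :
    japaneseBracket (X + Y) ≤ japaneseBracket X + japaneseBracket Y := by
  refine le_of_sq_le_sq ?_ (by linarith [japaneseBracket_pos X, japaneseBracket_pos Y])
  linarith [sq_add_sub_sq_japaneseBracket_add X Y, one_le_lorentzPairing X Y]

theorem lorentzPairing_add_self_le (X Y : E) :
    lorentzPairing (X + Y) X ≤ lorentzPairing X Y + 1 := by
  have h := mul_le_mul_of_nonneg_right (japaneseBracket_add_le X Y) (japaneseBracket_pos X).le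
  simp only [lorentzPairing, inner_add_left, real_inner_self_eq_norm_sq, real_inner_comm Y X]
  linarith [japaneseBracket_sq X]

theorem japaneseBracket_add_sub_eq (X Y : E) :
    japaneseBracket X + japaneseBracket Y - japaneseBracket (X + Y) =
      (1 + 2 * lorentzPairing X Y) /
        (japaneseBracket X + japaneseBracket Y + japaneseBracket (X + Y)) := by
  have := japaneseBracket_pos (X + Y)
  rw [eq_div_iff (by linarith [japaneseBracket_pos X, japaneseBracket_pos Y]),
    ← sq_add_sub_sq_japaneseBracket_add]
  ring

theorem norm_velocity_sub_le_defect (X Y : E) :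
    ‖velocity X - velocity Y‖ ≤
      6 * (japaneseBracket X + japaneseBracket Y - japaneseBracket (X + Y)) := by
  have ha := japaneseBracket_pos X
  have hb := japaneseBracket_pos Y
  have hc := japaneseBracket_pos (X + Y)
  have hc' := japaneseBracket_add_le X Y
  have hL := one_le_lorentzPairing X Y
  refine (norm_velocity_sub_le X Y).trans ?_
  rw [japaneseBracket_add_sub_eq, mul_div_assoc', div_le_div_iff₀ (by linarith) (by linarith)]
  nlinarith

theorem norm_velocity_add_sub_le_defect (X Y : E) :
    ‖velocity (X + Y) - velocity X‖ ≤
      6 * (japaneseBracket X + japaneseBracket Y - japaneseBracket (X + Y)) := by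
  have ha := japaneseBracket_pos X
  have hb := japaneseBracket_pos Y
  have hc := japaneseBracket_pos (X + Y)
  have hb' : japaneseBracket Y ≤ japaneseBracket (X + Y) + japaneseBracket X := by
    simpa using japaneseBracket_add_le (X + Y) (-X)
  have hL := one_le_lorentzPairing X Y
  have h := mul_le_mul (lorentzPairing_add_self_le X Y)
    (add_le_add_right hb' (japaneseBracket X + japaneseBracket (X + Y))) (by positivity)
    (by linarith)
  refine (norm_velocity_sub_le (X + Y) X).trans ?_
  rw [japaneseBracket_add_sub_eq, mul_div_assoc', div_le_div_iff₀ (by linarith) (by linarith)]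
  nlinarith

theorem norm_velocity_add_sub_right_le_defect (X Y : E) :
    ‖velocity (X + Y) - velocity Y‖ ≤
      6 * (japaneseBracket X + japaneseBracket Y - japaneseBracket (X + Y)) := by
  rw [add_comm X Y, add_comm (japaneseBracket X)]
  exact norm_velocity_add_sub_le_defect Y X

theorem norm_velocity_sub_add_norm_le {μ ν : ℝ} (hμ : μ = 1 ∨ μ = -1) (hν : ν = 1 ∨ ν = -1)
    (Y Z : E) :
    ‖velocity (Y + Z) - μ • velocity Y‖ + ‖μ • velocity Y - ν • velocity Z‖ ≤
      12 * |japaneseBracket (Y + Z) - μ * japaneseBracket Y - ν * japaneseBracket Z| := by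
  rcases hμ with rfl | rfl <;> rcases hν with rfl | rfl <;>
    simp only [one_smul, one_mul, neg_smul, neg_mul, sub_neg_eq_add]
  · have h₁ := norm_velocity_add_sub_le_defect Y Z
    have h₂ := norm_velocity_sub_le_defect Y Z
    linarith [neg_abs_le (japaneseBracket (Y + Z) - japaneseBracket Y - japaneseBracket Z)]
  · have h₁ := norm_velocity_add_sub_le_defect (Y + Z) (-Z)
    have h₂ := norm_velocity_add_sub_right_le_defect (Y + Z) (-Z)
    simp only [add_neg_cancel_right, japaneseBracket_neg, velocity_neg, sub_neg_eq_add] at h₁ h₂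
    rw [norm_sub_rev] at h₁
    linarith [le_abs_self (japaneseBracket (Y + Z) - japaneseBracket Y + japaneseBracket Z)]
  · have h₁ := norm_velocity_sub_le_defect (Y + Z) (-Y)
    have h₂ := norm_velocity_add_sub_right_le_defect (Y + Z) (-Y)
    simp only [add_neg_cancel_comm, japaneseBracket_neg, velocity_neg, sub_neg_eq_add] at h₁ h₂
    rw [show -velocity Y - velocity Z = -(velocity Z + velocity Y) by abel, norm_neg]
    linarith [le_abs_self (japaneseBracket (Y + Z) + japaneseBracket Y - japaneseBracket Z)]
  · have h₁ := norm_velocity_le_one (Y + Z)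
    have h₂ := norm_velocity_le_one Y
    have h₃ := norm_velocity_le_one Z
    have h₄ := norm_add_le (velocity (Y + Z)) (velocity Y)
    have h₅ := norm_add_le (-velocity Y) (velocity Z)
    rw [norm_neg] at h₅
    linarith [one_le_japaneseBracket (Y + Z), one_le_japaneseBracket Y, one_le_japaneseBracket Z,
      le_abs_self (japaneseBracket (Y + Z) + japaneseBracket Y + japaneseBracket Z)]

end Hyperboloid

local notation "ℝ²" => EuclideanSpace ℝ (Fin 2)

/-- The frequency `(ζ, k) ∈ ℝ² × ℤ` of `ℝ² × 𝕋`, as a point of `ℝ³`. -/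
def fullFrequency (k : ℤ) (ζ : ℝ²) : WithLp 2 (ℝ² × ℝ) := WithLp.toLp 2 (ζ, (k : ℝ))

theorem KGweight_eq_japaneseBracket (k : ℤ) (ζ : ℝ²) :
    KGweight k ζ = japaneseBracket (fullFrequency k ζ) := by
  rw [KGweight, japaneseBracket, WithLp.prod_norm_sq_eq_of_L2, fullFrequency]
  simp [add_assoc]

theorem fullFrequency_sub_add (n m : ℤ) (ξ η : ℝ²) :
    fullFrequency (n - m) (ξ - η) + fullFrequency m η = fullFrequency n ξ := by
  simp [fullFrequency, ← WithLp.toLp_add]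

def KGvelocity (k : ℤ) (ζ : ℝ²) : ℝ² := (KGweight k ζ)⁻¹ • ζ

theorem velocity_fullFrequency_fst (k : ℤ) (ζ : ℝ²) :
    (velocity (fullFrequency k ζ)).fst = KGvelocity k ζ := by
  rw [velocity, WithLp.smul_fst, KGvelocity, KGweight_eq_japaneseBracket]
  rfl

theorem hasFDerivAt_KGweight (k : ℤ) (ζ : ℝ²) :
    HasFDerivAt (KGweight k) (innerSL ℝ (KGvelocity k ζ)) ζ := by
  have h := ((((hasFDerivAt_id ζ).norm_sq).const_add 1).add_const ((k : ℝ) ^ 2)).sqrt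
    (by positivity)
  refine h.congr_fderiv ?_
  ext w
  simp only [id_eq, one_div, mul_inv_rev, ContinuousLinearMap.comp_id, smul_apply,
    coe_innerSL_apply, nsmul_eq_mul, Nat.cast_ofNat, smul_eq_mul, KGweight, KGvelocity, map_smul]
  ring

theorem hasFDerivAt_KGphase (μ ν : ℝ) (n m : ℤ) (ξ η : ℝ²) :
    HasFDerivAt (KGphase μ ν n m)
      ((innerSL ℝ (KGvelocity n ξ - μ • KGvelocity (n - m) (ξ - η))).comp
          (ContinuousLinearMap.fst ℝ ℝ² ℝ²) +
        (innerSL ℝ (μ • KGvelocity (n - m) (ξ - η) - ν • KGvelocity m η)).comp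
          (ContinuousLinearMap.snd ℝ ℝ² ℝ²)) (ξ, η) := by
  have hfst : HasFDerivAt (𝕜 := ℝ) Prod.fst (ContinuousLinearMap.fst ℝ ℝ² ℝ²) (ξ, η) :=
    hasFDerivAt_fst
  have hsnd : HasFDerivAt (𝕜 := ℝ) Prod.snd (ContinuousLinearMap.snd ℝ ℝ² ℝ²) (ξ, η) :=
    hasFDerivAt_snd
  have h₁ := (hasFDerivAt_KGweight n ξ).comp (ξ, η) hfst
  have h₂ := (hasFDerivAt_KGweight (n - m) (ξ - η)).comp (ξ, η) (hfst.sub hsnd)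
  have h₃ := (hasFDerivAt_KGweight m η).comp (ξ, η) hsnd
  refine ((h₁.sub (h₂.const_mul μ)).sub (h₃.const_mul ν)).congr_fderiv ?_
  refine ContinuousLinearMap.ext fun p => ?_
  simp only [ContinuousLinearMap.comp_sub, sub_apply, ContinuousLinearMap.comp_apply,
    ContinuousLinearMap.coe_fst', coe_innerSL_apply, smul_apply, ContinuousLinearMap.coe_snd',
    smul_eq_mul, map_sub, map_smul, ContinuousLinearMap.sub_comp, ContinuousLinearMap.smul_comp,
    add_apply]
  ring

theorem norm_fderiv_KGphase_le (μ ν : ℝ) (n m : ℤ) (ξ η : ℝ²) :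
    ‖fderiv ℝ (KGphase μ ν n m) (ξ, η)‖ ≤
      ‖KGvelocity n ξ - μ • KGvelocity (n - m) (ξ - η)‖ +
        ‖μ • KGvelocity (n - m) (ξ - η) - ν • KGvelocity m η‖ := by
  rw [(hasFDerivAt_KGphase μ ν n m ξ η).fderiv]
  refine (norm_add_le _ _).trans (add_le_add ?_ ?_) <;>
    refine (ContinuousLinearMap.opNorm_comp_le _ _).trans ?_ <;>
    rw [innerSL_apply_norm] <;>
    refine mul_le_of_le_one_right (norm_nonneg _) ?_
  exacts [ContinuousLinearMap.norm_fst_le ℝ ℝ² ℝ², ContinuousLinearMap.norm_snd_le ℝ ℝ² ℝ²]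

end KleinGordon

open KleinGordon

/-- There is a universal constant `C > 0` such that
`|∇_{ξ,η} Φ^{n,m}_{μ,ν}(ξ,η)| ≤ C |Φ^{n,m}_{μ,ν}(ξ,η)|` for all `ξ, η, n, m` and
all sign choices `μ, ν ∈ {+1, −1}`. -/
theorem phase_gradient_bound :
    ∃ C > (0 : ℝ), ∀ (μ ν : ℝ), (μ = 1 ∨ μ = -1) → (ν = 1 ∨ ν = -1) →
      ∀ (n m : ℤ) (ξ η : EuclideanSpace ℝ (Fin 2)),
        ‖fderiv ℝ (KGphase μ ν n m) (ξ, η)‖ ≤ C * |KGphase μ ν n m (ξ, η)| := by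
  refine ⟨12, by norm_num, fun μ ν hμ hν n m ξ η => ?_⟩
  set X := fullFrequency n ξ
  set Y := fullFrequency (n - m) (ξ - η)
  set Z := fullFrequency m η
  have hYZ : Y + Z = X := fullFrequency_sub_add n m ξ η
  have hΦ : KGphase μ ν n m (ξ, η) =
      japaneseBracket X - μ * japaneseBracket Y - ν * japaneseBracket Z := by
    simp only [KGphase, KGweight_eq_japaneseBracket, X, Y, Z]
  calc ‖fderiv ℝ (KGphase μ ν n m) (ξ, η)‖
      ≤ ‖KGvelocity n ξ - μ • KGvelocity (n - m) (ξ - η)‖ +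
          ‖μ • KGvelocity (n - m) (ξ - η) - ν • KGvelocity m η‖ :=
        norm_fderiv_KGphase_le μ ν n m ξ η
    _ ≤ ‖velocity X - μ • velocity Y‖ + ‖μ • velocity Y - ν • velocity Z‖ := by
        simp only [← velocity_fullFrequency_fst, ← WithLp.smul_fst, ← WithLp.sub_fst]
        exact add_le_add (WithLp.norm_fst_le _ _) (WithLp.norm_fst_le _ _)
    _ ≤ 12 * |KGphase μ ν n m (ξ, η)| := by
        rw [hΦ, ← hYZ]
        exact norm_velocity_sub_add_norm_le hμ hν Y Z
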